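/- Let α > 0, β > 1 and γ > 0 satisfy γ·(β−1) > 1. Suppose (U₁, V₁) and (U₂, V₂) are two solutions of the kinetic system on all of ℝ such that Uᵢ(t) > 0 and Vᵢ(t) > 0 for all t ∈ ℝ (i = 1,2) and (Uᵢ(t), Vᵢ(t)) → (γ, 0) as t → −∞ for i = 1,2. Then the two solutions coincide up to a time translation: there exists τ ∈ ℝ such that (U₂(t), V₂(t)) = (U₁(t + τ), V₁(t + τ)) for all t ∈ ℝ. -/

import Mathlib

/-!
Near `(γ, 0)` the predator equation reads `V' = V ((β - 1) U - 1) / (1 + U)` with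
`(β - 1) γ > 1`, so `V` increases along any orbit leaving `(γ, 0)`, and such an orbit is there a
graph `U = φ(V)` with `φ' = F / G`. For small `V > 0` the slope `F / G` is decreasing in `U`
(to leading order its `U`-derivative at `U = γ` is `-α γ (1 + γ) / (V ((β - 1) γ - 1))`), so
the squared gap between two such graphs, read at equal `V`, can only shrink as `V` grows. Both
graphs tend to `γ` as `V → 0`, hence the gap vanishes: the two orbits meet, and uniqueness for
the locally Lipschitz vector field makes the solutions time translates of each other.
-/

open Filter Set Topology Function

theorem ODE_solution_eq_of_contDiffAt {E : Type*} [NormedAddCommGroup E] [NormedSpace ℝ E]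
    {f : E → E} {x y : ℝ → E} (hf : ∀ t, ContDiffAt ℝ 1 f (x t))
    (hx : ∀ t, HasDerivAt x (f (x t)) t) (hy : ∀ t, HasDerivAt y (f (y t)) t) {t₀ : ℝ}
    (h : x t₀ = y t₀) : x = y := by
  have hxc : Continuous x := continuous_iff_continuousAt.mpr fun t => (hx t).continuousAt
  have hyc : Continuous y := continuous_iff_continuousAt.mpr fun t => (hy t).continuousAt
  have hopen : IsOpen {t | x t = y t} := by
    refine isOpen_iff_mem_nhds.mpr fun t₁ (ht₁ : x t₁ = y t₁) => ?_
    obtain ⟨K, s, hs, hK⟩ := (hf t₁).exists_lipschitzOnWith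
    have hxs : ∀ᶠ t in 𝓝 t₁, x t ∈ s := hxc.continuousAt hs
    have hys : ∀ᶠ t in 𝓝 t₁, y t ∈ s := hyc.continuousAt (ht₁ ▸ hs)
    exact ODE_solution_unique_of_eventually (v := fun _ => f) (.of_forall fun _ => hK)
      (hxs.mono fun t ht => ⟨hx t, ht⟩) (hys.mono fun t ht => ⟨hy t, ht⟩) ht₁
  have := IsClopen.eq_univ ⟨isClosed_eq hxc hyc, hopen⟩ ⟨t₀, h⟩
  exact funext fun t => (this ▸ mem_univ t : t ∈ {t | x t = y t})

theorem eventually_eq_zero_of_mul_deriv_nonpos {w w' : ℝ → ℝ}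
    (hw : ∀ᶠ t in atBot, HasDerivAt w (w' t) t ∧ w t * w' t ≤ 0)
    (hlim : Tendsto w atBot (𝓝 0)) : ∀ᶠ t in atBot, w t = 0 := by
  obtain ⟨T, hT⟩ := eventually_atBot.mp hw
  have hanti : AntitoneOn (fun t => w t * w t) (Iic T) := by
    refine antitoneOn_of_hasDerivWithinAt_nonpos (f' := fun t => w' t * w t + w t * w' t)
      (convex_Iic T)
      (fun t ht => ((hT t ht).1.continuousAt.mul (hT t ht).1.continuousAt).continuousWithinAt)
      (fun t ht => ?_) (fun t ht => ?_)
    · have hwt := (hT t (interior_subset (s := Iic T) ht)).1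
      exact (hwt.mul hwt).hasDerivWithinAt
    · linarith [(hT t (interior_subset (s := Iic T) ht)).2]
  refine eventually_atBot.mpr ⟨T, fun t ht => mul_self_eq_zero.mp ?_⟩
  refine le_antisymm (ge_of_tendsto (by simpa using hlim.mul hlim) ?_) (mul_self_nonneg _)
  exact eventually_atBot.mpr ⟨t, fun a ha => hanti (ha.trans ht) ht ha⟩

section InverseOnHalfLine

variable {f : ℝ → ℝ} {T L : ℝ}

theorem StrictMonoOn.lt_of_tendsto_atBot (hf : StrictMonoOn f (Iic T))
    (hL : Tendsto f atBot (𝓝 L)) {s : ℝ} (hs : s ≤ T) : L < f s := by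
  have hle : L ≤ f (s - 1) := le_of_tendsto hL <| eventually_atBot.mpr
    ⟨s - 1, fun t ht => hf.monotoneOn (by simp; linarith) (by simp; linarith) ht⟩
  exact hle.trans_lt (hf (by simp; linarith) hs (by linarith))

theorem StrictMonoOn.bijOn_Iio (hf : StrictMonoOn f (Iic T)) (hc : ContinuousOn f (Iic T))
    (hL : Tendsto f atBot (𝓝 L)) : BijOn f (Iio T) (Ioo L (f T)) := by
  refine ⟨fun s (hs : s < T) => ⟨hf.lt_of_tendsto_atBot hL hs.le, hf hs.le self_mem_Iic hs⟩,
    hf.injOn.mono Iio_subset_Iic_self, ?_⟩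
  rintro y ⟨hLy, hyT⟩
  obtain ⟨s, hsy, hsT⟩ := ((hL.eventually (gt_mem_nhds hLy)).and (eventually_le_atBot T)).exists
  exact image_mono Ico_subset_Iio_self <|
    intermediate_value_Ico hsT (hc.mono Icc_subset_Iic_self) ⟨hsy.le, hyT⟩

theorem StrictMonoOn.tendsto_invFunOn_Iio (hf : StrictMonoOn f (Iic T))
    (hc : ContinuousOn f (Iic T)) (hL : Tendsto f atBot (𝓝 L)) :
    Tendsto (invFunOn f (Iio T)) (𝓝[>] L) atBot := by
  have hinv := (hf.bijOn_Iio hc hL).invOn_invFunOn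
  refine tendsto_atBot.mpr fun M => ?_
  have hs : min M T - 1 < T := by linarith [min_le_right M T]
  filter_upwards [Ioo_mem_nhdsGT (hf.lt_of_tendsto_atBot hL hs.le)] with y hy
  have hyT : y ∈ Ioo L (f T) := ⟨hy.1, hy.2.trans (hf hs.le self_mem_Iic hs)⟩
  have hρ : invFunOn f (Iio T) y ≤ min M T - 1 := by
    refine (hf.le_iff_le (mem_Iic.mpr ?_) hs.le).mp (by rw [hinv.2 hyT]; exact hy.2.le)
    exact ((hf.bijOn_Iio hc hL).surjOn.mapsTo_invFunOn hyT).le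
  linarith [min_le_left M T]

theorem StrictMonoOn.hasDerivAt_invFunOn_Iio (hf : StrictMonoOn f (Iic T))
    (hc : ContinuousOn f (Iic T)) (hL : Tendsto f atBot (𝓝 L)) {y a : ℝ} (hy : y ∈ Ioo L (f T))
    (hd : HasDerivAt f a (invFunOn f (Iio T) y)) (ha : a ≠ 0) :
    HasDerivAt (invFunOn f (Iio T)) a⁻¹ y := by
  have hbij := hf.bijOn_Iio hc hL
  have hinv := hbij.invOn_invFunOn
  have hbij' := hbij.symm hinv.symm
  have hmono : MonotoneOn (invFunOn f (Iio T)) (Ioo L (f T)) := fun y₁ hy₁ y₂ hy₂ h =>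
    (hf.le_iff_le (Iio_subset_Iic_self (hbij'.mapsTo hy₁))
      (Iio_subset_Iic_self (hbij'.mapsTo hy₂))).mp (by rwa [hinv.2 hy₁, hinv.2 hy₂])
  have hcont : ContinuousAt (invFunOn f (Iio T)) y :=
    continuousAt_of_monotoneOn_of_image_mem_nhds hmono (Ioo_mem_nhds hy.1 hy.2)
      (by rw [hbij'.image_eq]; exact Iio_mem_nhds (hbij'.mapsTo hy))
  exact .of_local_left_inverse hcont hd ha
    (eventually_of_mem (Ioo_mem_nhds hy.1 hy.2) fun z hz => hinv.2 hz)

end InverseOnHalfLine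

noncomputable section

namespace RosenzweigMacArthur

variable {α β γ : ℝ}

def F (α γ u v : ℝ) : ℝ := α * u * (γ - u) - u * v / (1 + u)

def G (β u v : ℝ) : ℝ := -v + β * u * v / (1 + u)

def vectorField (α β γ : ℝ) (p : ℝ × ℝ) : ℝ × ℝ := (F α γ p.1 p.2, G β p.1 p.2)

def IsSolution (α β γ : ℝ) (U V : ℝ → ℝ) : Prop :=
  ∀ t, HasDerivAt U (F α γ (U t) (V t)) t ∧ HasDerivAt V (G β (U t) (V t)) t

def slope (α β γ u v : ℝ) : ℝ := F α γ u v / G β u v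

/-- `α (g u₂ q u₁ - g u₁ q u₂) / (u₂ - u₁) + v` with `g u = u (γ - u) (1 + u)` and
`q u = (β - 1) u - 1`: the numerator of the divided difference of `slope` in `u`. -/
def slopeDiffCoeff (α β γ u₁ u₂ v : ℝ) : ℝ :=
  α * ((β - 1) * u₁ * u₂ * (γ - 1 - u₁ - u₂)
    - (γ + (γ - 1) * (u₁ + u₂) - (u₁ ^ 2 + u₁ * u₂ + u₂ ^ 2))) + v

theorem G_eq {u : ℝ} (v : ℝ) (hu : 1 + u ≠ 0) : G β u v = v * ((β - 1) * u - 1) / (1 + u) := by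
  unfold G
  field_simp
  ring

theorem G_pos {u v : ℝ} (hu : 0 < 1 + u) (hq : 0 < (β - 1) * u - 1) (hv : 0 < v) :
    0 < G β u v := by
  rw [G_eq v hu.ne']
  positivity

theorem slope_eq {u v : ℝ} (hu : 1 + u ≠ 0) :
    slope α β γ u v = (α * u * (γ - u) * (1 + u) - u * v) / (v * ((β - 1) * u - 1)) := by
  rw [slope, G_eq v hu, F, div_div_eq_mul_div, sub_mul, div_mul_cancel₀ _ hu]

theorem slope_sub_slope {u₁ u₂ v : ℝ} (h₁ : 1 + u₁ ≠ 0) (h₂ : 1 + u₂ ≠ 0)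
    (hq₁ : (β - 1) * u₁ - 1 ≠ 0) (hq₂ : (β - 1) * u₂ - 1 ≠ 0) (hv : v ≠ 0) :
    slope α β γ u₂ v - slope α β γ u₁ v =
      (u₂ - u₁) * slopeDiffCoeff α β γ u₁ u₂ v /
        (v * ((β - 1) * u₁ - 1) * ((β - 1) * u₂ - 1)) := by
  rw [slope_eq h₁, slope_eq h₂, div_sub_div _ _ (mul_ne_zero hv hq₂) (mul_ne_zero hv hq₁),
    div_eq_div_iff (by positivity) (by positivity), slopeDiffCoeff]
  ring

theorem eventually_one_add_pos_and_mul_sub_one_pos (hγ : 0 < γ) (h1 : 1 < γ * (β - 1)) :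
    ∀ᶠ u in 𝓝 γ, 0 < 1 + u ∧ 0 < (β - 1) * u - 1 := by
  have h₁ : Tendsto (fun u => 1 + u) (𝓝 γ) (𝓝 (1 + γ)) := tendsto_id.const_add 1
  have h₂ : Tendsto (fun u => (β - 1) * u - 1) (𝓝 γ) (𝓝 ((β - 1) * γ - 1)) :=
    (tendsto_id.const_mul _).sub_const 1
  exact (h₁.eventually_const_lt (by linarith)).and (h₂.eventually_const_lt (by linarith))

theorem eventually_G_pos (hγ : 0 < γ) (h1 : 1 < γ * (β - 1)) :
    ∀ᶠ p : ℝ × ℝ in 𝓝 (γ, 0), 0 < p.2 → 0 < G β p.1 p.2 :=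
  ((continuous_fst.tendsto (γ, 0)).eventually
    (eventually_one_add_pos_and_mul_sub_one_pos hγ h1)).mono fun _ hp hv => G_pos hp.1 hp.2 hv

theorem eventually_mul_slope_sub_slope_nonpos (hα : 0 < α) (hγ : 0 < γ) (h1 : 1 < γ * (β - 1)) :
    ∀ᶠ p : ℝ × ℝ × ℝ in 𝓝 (γ, γ, 0), 0 < p.2.2 →
      (p.2.1 - p.1) * (slope α β γ p.2.1 p.2.2 - slope α β γ p.1 p.2.2) ≤ 0 := by
  have hcoeff : ∀ᶠ p : ℝ × ℝ × ℝ in 𝓝 (γ, γ, 0), slopeDiffCoeff α β γ p.1 p.2.1 p.2.2 < 0 := by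
    have hc : Continuous fun p : ℝ × ℝ × ℝ => slopeDiffCoeff α β γ p.1 p.2.1 p.2.2 := by
      unfold slopeDiffCoeff
      fun_prop
    refine hc.continuousAt.eventually_lt continuousAt_const ?_
    have hval : slopeDiffCoeff α β γ γ γ 0 = -(α * (γ * (1 + γ) * (γ * (β - 1) - 1))) := by
      rw [slopeDiffCoeff]
      ring
    have : 0 < γ * (β - 1) - 1 := by linarith
    rw [hval, neg_lt_zero]
    positivity
  have hu₁ := (continuous_fst.tendsto (γ, γ, (0 : ℝ))).eventually
    (eventually_one_add_pos_and_mul_sub_one_pos hγ h1)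
  have hu₂ := ((continuous_fst.comp continuous_snd).tendsto (γ, γ, (0 : ℝ))).eventually
    (eventually_one_add_pos_and_mul_sub_one_pos hγ h1)
  filter_upwards [hcoeff, hu₁, hu₂] with p hp ⟨h₁, hq₁⟩ ⟨h₂, hq₂⟩ hv
  dsimp only [comp_apply] at h₂ hq₂
  rw [slope_sub_slope h₁.ne' h₂.ne' hq₁.ne' hq₂.ne' hv.ne', ← mul_div_assoc, ← mul_assoc]
  exact div_nonpos_of_nonpos_of_nonneg
    (mul_nonpos_of_nonneg_of_nonpos (mul_self_nonneg _) hp.le) (by positivity)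

theorem contDiffAt_vectorField {p : ℝ × ℝ} (hp : 1 + p.1 ≠ 0) :
    ContDiffAt ℝ 1 (vectorField α β γ) p := by
  have hden : ContDiffAt ℝ 1 (fun q : ℝ × ℝ => 1 + q.1) p := by fun_prop
  refine ContDiffAt.prodMk ?_ ?_
  · exact (by fun_prop : ContDiffAt ℝ 1 (fun q : ℝ × ℝ => α * q.1 * (γ - q.1)) p).sub
      ((by fun_prop : ContDiffAt ℝ 1 (fun q : ℝ × ℝ => q.1 * q.2) p).div hden hp)
  · exact (by fun_prop : ContDiffAt ℝ 1 (fun q : ℝ × ℝ => -q.2) p).add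
      ((by fun_prop : ContDiffAt ℝ 1 (fun q : ℝ × ℝ => β * q.1 * q.2) p).div hden hp)

variable {U V U₁ V₁ U₂ V₂ : ℝ → ℝ}

theorem IsSolution.hasDerivAt_prod (h : IsSolution α β γ U V) (t : ℝ) :
    HasDerivAt (fun t => (U t, V t)) (vectorField α β γ (U t, V t)) t :=
  (h t).1.prodMk (h t).2

theorem IsSolution.comp_add_const (h : IsSolution α β γ U V) (τ : ℝ) :
    IsSolution α β γ (fun t => U (t + τ)) (fun t => V (t + τ)) := fun t =>
  ⟨by simpa using (h (t + τ)).1.comp_add_const t τ,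
    by simpa using (h (t + τ)).2.comp_add_const t τ⟩

theorem IsSolution.eq_comp_add_of_eq (h₁ : IsSolution α β γ U₁ V₁) (h₂ : IsSolution α β γ U₂ V₂)
    (hU₁ : ∀ t, 1 + U₁ t ≠ 0) {s t : ℝ} (hU : U₂ s = U₁ t) (hV : V₂ s = V₁ t) (r : ℝ) :
    U₂ r = U₁ (r + (t - s)) ∧ V₂ r = V₁ (r + (t - s)) := by
  have := ODE_solution_eq_of_contDiffAt (fun r => contDiffAt_vectorField (hU₁ (r + (t - s))))
    ((h₁.comp_add_const (t - s)).hasDerivAt_prod) h₂.hasDerivAt_prod (t₀ := s)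
    (by simp [hU, hV])
  exact Prod.ext_iff.mp (congrFun this r).symm

theorem IsSolution.hasDerivAt_sub_comp (h₁ : IsSolution α β γ U₁ V₁)
    (h₂ : IsSolution α β γ U₂ V₂) {ρ : ℝ → ℝ} {t : ℝ}
    (hρ : HasDerivAt ρ (G β (U₂ (ρ (V₁ t))) (V₂ (ρ (V₁ t))))⁻¹ (V₁ t))
    (hV : V₂ (ρ (V₁ t)) = V₁ t) (hG : G β (U₁ t) (V₁ t) ≠ 0) :
    HasDerivAt (fun s => U₂ (ρ (V₁ s)) - U₁ s)
      ((slope α β γ (U₂ (ρ (V₁ t))) (V₁ t) - slope α β γ (U₁ t) (V₁ t)) *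
        G β (U₁ t) (V₁ t)) t := by
  refine (((h₂ (ρ (V₁ t))).1.comp t (hρ.comp t (h₁ t).2)).sub (h₁ t).1).congr_deriv ?_
  rw [hV, sub_mul, slope, slope, div_mul_cancel₀ _ hG]
  ring

theorem IsSolution.exists_graph_over_V (hγ : 0 < γ) (h1 : 1 < γ * (β - 1))
    (h : IsSolution α β γ U V) (hV : ∀ t, 0 < V t)
    (hlim : Tendsto (fun t => (U t, V t)) atBot (𝓝 (γ, 0))) :
    ∃ ρ : ℝ → ℝ, ∃ v₀ > 0, Tendsto ρ (𝓝[>] 0) atBot ∧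
      ∀ y ∈ Ioo 0 v₀, V (ρ y) = y ∧ HasDerivAt ρ (G β (U (ρ y)) (V (ρ y)))⁻¹ y := by
  obtain ⟨T, hT⟩ := eventually_atBot.mp <|
    (hlim.eventually (eventually_G_pos hγ h1)).mono fun t ht => ht (hV t)
  have hc : ContinuousOn V (Iic T) := fun t _ => (h t).2.continuousAt.continuousWithinAt
  have hmono : StrictMonoOn V (Iic T) :=
    strictMonoOn_of_hasDerivWithinAt_pos (convex_Iic T) hc (fun t _ => (h t).2.hasDerivWithinAt)
      (fun t ht => hT t (interior_subset (s := Iic T) ht))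
  have hbij := hmono.bijOn_Iio hc hlim.snd_nhds
  refine ⟨invFunOn V (Iio T), V T, hV T, hmono.tendsto_invFunOn_Iio hc hlim.snd_nhds,
    fun y hy => ⟨hbij.invOn_invFunOn.2 hy, ?_⟩⟩
  exact hmono.hasDerivAt_invFunOn_Iio hc hlim.snd_nhds hy (h _).2
    (hT _ (hbij.surjOn.mapsTo_invFunOn hy).le).ne'

theorem exists_common_point_of_tendsto (hα : 0 < α) (hγ : 0 < γ) (h1 : 1 < γ * (β - 1))
    (h₁ : IsSolution α β γ U₁ V₁) (h₂ : IsSolution α β γ U₂ V₂)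
    (hV₁ : ∀ t, 0 < V₁ t) (hV₂ : ∀ t, 0 < V₂ t)
    (hlim₁ : Tendsto (fun t => (U₁ t, V₁ t)) atBot (𝓝 (γ, 0)))
    (hlim₂ : Tendsto (fun t => (U₂ t, V₂ t)) atBot (𝓝 (γ, 0))) :
    ∃ s t, U₂ s = U₁ t ∧ V₂ s = V₁ t := by
  obtain ⟨ρ, v₀, hv₀, hρlim, hρ⟩ := h₂.exists_graph_over_V hγ h1 hV₂ hlim₂
  have hV₁lim : Tendsto V₁ atBot (𝓝[>] 0) :=
    tendsto_nhdsWithin_iff.mpr ⟨hlim₁.snd_nhds, .of_forall hV₁⟩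
  have hU₂ρ : Tendsto (fun t => U₂ (ρ (V₁ t))) atBot (𝓝 γ) :=
    hlim₂.fst_nhds.comp (hρlim.comp hV₁lim)
  have hsmall : ∀ᶠ t in atBot, V₁ t ∈ Ioo 0 v₀ := hV₁lim (Ioo_mem_nhdsGT hv₀)
  have hslope := (hlim₁.fst_nhds.prodMk_nhds (hU₂ρ.prodMk_nhds hlim₁.snd_nhds)).eventually
    (eventually_mul_slope_sub_slope_nonpos hα hγ h1)
  have hG := hlim₁.eventually (eventually_G_pos hγ h1)
  -- the gap between the two orbits at equal `V`
  have hw : ∀ᶠ t in atBot,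
      HasDerivAt (fun s => U₂ (ρ (V₁ s)) - U₁ s)
        ((slope α β γ (U₂ (ρ (V₁ t))) (V₁ t) - slope α β γ (U₁ t) (V₁ t)) *
          G β (U₁ t) (V₁ t)) t ∧
      (U₂ (ρ (V₁ t)) - U₁ t) *
        ((slope α β γ (U₂ (ρ (V₁ t))) (V₁ t) - slope α β γ (U₁ t) (V₁ t)) * G β (U₁ t) (V₁ t))
        ≤ 0 := by
    filter_upwards [hsmall, hslope, hG] with t hsm hsl hGt
    obtain ⟨hV, hd⟩ := hρ _ hsm
    refine ⟨h₁.hasDerivAt_sub_comp h₂ hd hV (hGt (hV₁ t)).ne', ?_⟩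
    rw [← mul_assoc]
    exact mul_nonpos_of_nonpos_of_nonneg (hsl (hV₁ t)) (hGt (hV₁ t)).le
  have hwlim : Tendsto (fun t => U₂ (ρ (V₁ t)) - U₁ t) atBot (𝓝 0) := by
    simpa using hU₂ρ.sub hlim₁.fst_nhds
  obtain ⟨t, hwt, hsm⟩ := ((eventually_eq_zero_of_mul_deriv_nonpos hw hwlim).and hsmall).exists
  exact ⟨ρ (V₁ t), t, sub_eq_zero.mp hwt, (hρ _ hsm).1⟩

end RosenzweigMacArthur

end

open RosenzweigMacArthur

theorem uniqueness_heteroclinic_from_gamma_general (α β γ : ℝ)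
    (hα : 0 < α) (hγ : 0 < γ) (h1 : 1 < γ * (β - 1))
    (U₁ V₁ U₂ V₂ : ℝ → ℝ)
    (hsol₁ : ∀ t : ℝ,
      HasDerivAt U₁ (α * U₁ t * (γ - U₁ t) - U₁ t * V₁ t / (1 + U₁ t)) t ∧
      HasDerivAt V₁ (-(V₁ t) + β * U₁ t * V₁ t / (1 + U₁ t)) t)
    (hsol₂ : ∀ t : ℝ,
      HasDerivAt U₂ (α * U₂ t * (γ - U₂ t) - U₂ t * V₂ t / (1 + U₂ t)) t ∧
      HasDerivAt V₂ (-(V₂ t) + β * U₂ t * V₂ t / (1 + U₂ t)) t)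
    (hpos₁ : ∀ t : ℝ, 0 < U₁ t ∧ 0 < V₁ t)
    (hpos₂ : ∀ t : ℝ, 0 < U₂ t ∧ 0 < V₂ t)
    (hlim₁ : Tendsto (fun t => (U₁ t, V₁ t)) atBot (nhds ((γ, 0) : ℝ × ℝ)))
    (hlim₂ : Tendsto (fun t => (U₂ t, V₂ t)) atBot (nhds ((γ, 0) : ℝ × ℝ))) :
    ∃ τ : ℝ, ∀ t : ℝ, U₂ t = U₁ (t + τ) ∧ V₂ t = V₁ (t + τ) := by
  obtain ⟨s, t, hU, hV⟩ := exists_common_point_of_tendsto hα hγ h1 hsol₁ hsol₂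
    (fun t => (hpos₁ t).2) (fun t => (hpos₂ t).2) hlim₁ hlim₂
  exact ⟨t - s, IsSolution.eq_comp_add_of_eq hsol₁ hsol₂
    (fun r => (add_pos one_pos (hpos₁ r).1).ne') hU hV⟩

/-- Rosenzweig–MacArthur kinetic system: if `γ(β-1) > 1`, any two entire solutions
with positive components converging to `(γ, 0)` as `t → -∞` coincide up to a time
translation (uniqueness of the heteroclinic orbit leaving `(γ,0)`). -/
theorem uniqueness_heteroclinic_from_gamma (α β γ : ℝ)
    (hα : 0 < α) (hβ : 1 < β) (hγ : 0 < γ) (h1 : 1 < γ * (β - 1))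
    (U₁ V₁ U₂ V₂ : ℝ → ℝ)
    (hsol₁ : ∀ t : ℝ,
      HasDerivAt U₁ (α * U₁ t * (γ - U₁ t) - U₁ t * V₁ t / (1 + U₁ t)) t ∧
      HasDerivAt V₁ (-(V₁ t) + β * U₁ t * V₁ t / (1 + U₁ t)) t)
    (hsol₂ : ∀ t : ℝ,
      HasDerivAt U₂ (α * U₂ t * (γ - U₂ t) - U₂ t * V₂ t / (1 + U₂ t)) t ∧
      HasDerivAt V₂ (-(V₂ t) + β * U₂ t * V₂ t / (1 + U₂ t)) t)
    (hpos₁ : ∀ t : ℝ, 0 < U₁ t ∧ 0 < V₁ t)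
    (hpos₂ : ∀ t : ℝ, 0 < U₂ t ∧ 0 < V₂ t)
    (hlim₁ : Tendsto (fun t => (U₁ t, V₁ t)) atBot (nhds ((γ, 0) : ℝ × ℝ)))
    (hlim₂ : Tendsto (fun t => (U₂ t, V₂ t)) atBot (nhds ((γ, 0) : ℝ × ℝ))) :
    ∃ τ : ℝ, ∀ t : ℝ, U₂ t = U₁ (t + τ) ∧ V₂ t = V₁ (t + τ) :=
  uniqueness_heteroclinic_from_gamma_general α β γ hα hγ h1 U₁ V₁ U₂ V₂ hsol₁ hsol₂ hpos₁ hpos₂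
    hlim₁ hlim₂
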